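/- arXiv:1711.00940 — 9 statements merged into one kernel-verified Lean document; each statement's English description precedes it below -/
import Mathlib

section
/- For all positive integers m, n, k and all strictly increasing maps a : Fin k → Fin m and b : Fin k → Fin n, there exist monotone maps x : Fin m → Fin n and y : Fin n → Fin m such that the set of deals of (x,y) is exactly { (a t, b t) : t ∈ Fin k }. -/
/-- A strictly monotone map from a nonempty `Fin k` has a monotone retraction. -/
lemma exists_monotone_retract {k m : ℕ} (hk : 0 < k) (a : Fin k → Fin m)
    (ha : StrictMono a) :
    ∃ F : Fin m → Fin k, Monotone F ∧ ∀ t, F (a t) = t := by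
  classical
  refine ⟨fun i => if h : (Finset.univ.filter fun t => a t ≤ i).Nonempty
      then (Finset.univ.filter fun t => a t ≤ i).max' h else ⟨0, hk⟩, ?_, ?_⟩
  · intro i i' hii'
    have hsub : (Finset.univ.filter fun t => a t ≤ i) ⊆
        (Finset.univ.filter fun t => a t ≤ i') := by
      intro s hs
      simp only [Finset.mem_filter, Finset.mem_univ, true_and] at hs ⊢
      exact hs.trans hii'
    by_cases h : (Finset.univ.filter fun t => a t ≤ i).Nonempty
    · have h' : (Finset.univ.filter fun t => a t ≤ i').Nonempty := h.mono hsub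
      simp only [dif_pos h, dif_pos h']
      exact Finset.max'_le _ h _ fun s hs => Finset.le_max' _ s (hsub hs)
    · simp only [dif_neg h]
      by_cases h' : (Finset.univ.filter fun t => a t ≤ i').Nonempty
      · simp only [dif_pos h']
        exact Fin.mk_le_mk.mpr (Nat.zero_le _) |>.trans le_rfl
      · simp [dif_neg h']
  · intro t
    have hmem : t ∈ Finset.univ.filter fun s => a s ≤ a t := by simp
    have h : (Finset.univ.filter fun s => a s ≤ a t).Nonempty := ⟨t, hmem⟩
    simp only [dif_pos h]
    refine le_antisymm (Finset.max'_le _ h _ fun s hs => ?_) (Finset.le_max' _ _ hmem)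
    simp only [Finset.mem_filter, Finset.mem_univ, true_and] at hs
    exact ha.le_iff_le.mp hs

/-- Any set of pairwise disjoint non-crossing edges between `A` and `B`
(i.e. given by strictly increasing maps) is the deal set `G(x,y)` of some
pair of monotone strategies. -/
theorem monotone_bargaining_realize_deal_set
    (m n k : ℕ) (hm : 0 < m) (hn : 0 < n) (hk : 0 < k)
    (a : Fin k → Fin m) (ha : StrictMono a)
    (b : Fin k → Fin n) (hb : StrictMono b) :
    ∃ (x : Fin m → Fin n) (y : Fin n → Fin m), Monotone x ∧ Monotone y ∧
      {p : Fin m × Fin n | x p.1 = p.2 ∧ y p.2 = p.1} =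
        {p : Fin m × Fin n | ∃ t : Fin k, p = (a t, b t)} := by
  obtain ⟨F, hF, hFa⟩ := exists_monotone_retract hk a ha
  obtain ⟨G, hG, hGb⟩ := exists_monotone_retract hk b hb
  refine ⟨b ∘ F, a ∘ G, hb.monotone.comp hF, ha.monotone.comp hG, ?_⟩
  ext ⟨i, j⟩
  simp only [Set.mem_setOf_eq, Function.comp_apply, Prod.mk.injEq]
  constructor
  · rintro ⟨hx, hy⟩
    rw [← hx, hGb] at hy
    exact ⟨F i, hy.symm, hx.symm⟩
  · rintro ⟨t, rfl, rfl⟩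
    rw [hFa, hGb]
    exact ⟨rfl, rfl⟩
end

section
/- For all positive integers m, n, k, every monotone map x : Fin m → Fin n, and every strictly increasing map a : Fin k → Fin m such that t ↦ x (a t) is also strictly increasing, there exists a monotone map y : Fin n → Fin m such that the set of deals of (x,y) is exactly { (a t, x (a t)) : t ∈ Fin k }. -/
/-- Any set of pairwise disjoint edges corresponding to a monotone strategy
`x` of Alice forms the deal set `G(x,y)` for some monotone strategy `y` of
Bob. -/
theorem monotone_bargaining_realize_deal_set_given_x
    (m n k : ℕ) (hm : 0 < m) (hn : 0 < n) (hk : 0 < k)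
    (x : Fin m → Fin n) (hx : Monotone x)
    (a : Fin k → Fin m) (ha : StrictMono a)
    (hxa : StrictMono (fun t => x (a t))) :
    ∃ y : Fin n → Fin m, Monotone y ∧
      {p : Fin m × Fin n | x p.1 = p.2 ∧ y p.2 = p.1} =
        {p : Fin m × Fin n | ∃ t : Fin k, p = (a t, x (a t))} := by
  set S : Fin n → Finset (Fin k) :=
    fun c => Finset.univ.filter (fun t => x (a t) ≤ c) with hS
  refine ⟨fun c => if h : (S c).Nonempty then a ((S c).max' h) else a ⟨0, hk⟩, ?_, ?_⟩
  · intro c c' hcc'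
    have hsub : S c ⊆ S c' := by
      intro t ht
      simp only [hS, Finset.mem_filter, Finset.mem_univ, true_and] at ht ⊢
      exact le_trans ht hcc'
    by_cases h : (S c).Nonempty
    · have h' : (S c').Nonempty := h.mono hsub
      simp only [dif_pos h, dif_pos h']
      exact ha.monotone (Finset.max'_le _ h _ fun t ht =>
        Finset.le_max' _ t (hsub ht))
    · simp only [dif_neg h]
      by_cases h' : (S c').Nonempty
      · simp only [dif_pos h']
        exact ha.monotone (Fin.mk_le_of_le_val (Nat.zero_le _))
      · simp only [dif_neg h']; exact le_refl _
  · ext p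
    simp only [Set.mem_setOf_eq]
    constructor
    · rintro ⟨hx1, hy⟩
      by_cases h : (S p.2).Nonempty
      · refine ⟨(S p.2).max' h, ?_⟩
        rw [dif_pos h] at hy
        rw [hy, hx1]
      · rw [dif_neg h] at hy
        exfalso
        apply h
        refine ⟨⟨0, hk⟩, ?_⟩
        simp only [hS, Finset.mem_filter, Finset.mem_univ, true_and]
        rw [hy, hx1]
    · rintro ⟨t, rfl⟩
      refine ⟨rfl, ?_⟩
      have hmem : t ∈ S (x (a t)) := by
        simp [hS]
      have h : (S (x (a t))).Nonempty := ⟨t, hmem⟩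
      rw [dif_pos h]
      congr 1
      refine le_antisymm (Finset.max'_le _ h _ fun s hs => ?_) (Finset.le_max' _ t hmem)
      simp only [hS, Finset.mem_filter, Finset.mem_univ, true_and] at hs
      exact (hxa.le_iff_le).mp hs
end

section
/- Let m, n be positive integers and W ⊆ Fin m × Fin n. If for every monotone map y : Fin n → Fin m there exists a monotone map x : Fin m → Fin n such that some deal of (x,y) lies in W, then there exists a monotone map x : Fin m → Fin n such that for every monotone map y : Fin n → Fin m, every deal of (x,y) lies in W. -/
/-- Theorem 1: if every monotone strategy `y` of Bob admits a monotone
strategy `x` of Alice with a deal of `(x,y)` in `W`, then Alice has a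
monotone strategy `x` all of whose deals (against every monotone `y`)
lie in `W`. -/
theorem monotone_bargaining_effectivity
    (m n : ℕ) (hm : 0 < m) (hn : 0 < n)
    (W : Set (Fin m × Fin n))
    (h : ∀ y : Fin n → Fin m, Monotone y →
      ∃ x : Fin m → Fin n, Monotone x ∧
        ∃ p : Fin m × Fin n, x p.1 = p.2 ∧ y p.2 = p.1 ∧ p ∈ W) :
    ∃ x : Fin m → Fin n, Monotone x ∧
      ∀ y : Fin n → Fin m, Monotone y →
        ∀ p : Fin m × Fin n, x p.1 = p.2 → y p.2 = p.1 → p ∈ W := by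
  classical
  have h' : ∀ y : Fin n → Fin m, Monotone y → ∃ b : Fin n, (y b, b) ∈ W := by
    intro y hy
    obtain ⟨x, hx, p, hx1, hy1, hW⟩ := h y hy
    refine ⟨p.2, ?_⟩
    rw [hy1]
    exact hW
  suffices H : ∃ x : Fin m → Fin n, Monotone x ∧ ∀ a, (a, x a) ∈ W by
    obtain ⟨x, hx, hxa⟩ := H
    refine ⟨x, hx, fun y hy p h1 h2 => ?_⟩
    have := hxa p.1
    rw [h1] at this
    exact this
  by_contra hc
  push_neg at hc
  -- `A a b` : there is a monotone partial transversal of `W` on `[0,a]` ending at `b`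
  set A : Fin m → Fin n → Prop :=
    fun a b => ∃ x : Fin m → Fin n, Monotone x ∧ (∀ a' ≤ a, ((a', x a') : Fin m × Fin n) ∈ W) ∧ x a = b with hAdef
  -- extension lemma
  have ext : ∀ (a : Fin m) (b : Fin n), (a, b) ∈ W →
      (∀ a' < a, ∃ b' ≤ b, A a' b') → A a b := by
    intro a b hab hprev
    by_cases ha : a = ⟨0, hm⟩
    · refine ⟨fun _ => b, monotone_const, ?_, rfl⟩
      intro a' ha'
      have : a' = a := by
        subst ha
        exact le_antisymm ha' (Fin.mk_le_mk.mpr (Nat.zero_le _))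
      rw [this]; exact hab
    · have hav : 0 < a.val := by
        rcases Nat.eq_zero_or_pos a.val with h0 | h0
        · exact absurd (Fin.ext h0) ha
        · exact h0
      set a'' : Fin m := ⟨a.val - 1, lt_trans (Nat.sub_lt hav one_pos) a.isLt⟩ with ha''
      have ha''lt : a'' < a := by
        simp only [Fin.lt_def]
        exact Nat.sub_lt hav one_pos
      obtain ⟨b', hb'le, x, hx, hxt, hxe⟩ := hprev a'' ha''lt
      refine ⟨fun c => if c ≤ a'' then x c else b, ?_, ?_, ?_⟩
      · intro c c' hcc'
        by_cases hc1 : c ≤ a''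
        · by_cases hc2 : c' ≤ a''
          · simpa [hc1, hc2] using hx hcc'
          · simp only [hc1, hc2, if_true, if_false]
            calc x c ≤ x a'' := hx hc1
              _ = b' := hxe
              _ ≤ b := hb'le
        · have hc2 : ¬ c' ≤ a'' := fun hh => hc1 (le_trans hcc' hh)
          simp [hc1, hc2]
      · intro a' ha'
        by_cases hc1 : a' ≤ a''
        · simpa [hc1] using hxt a' hc1
        · have heq : a' = a := by
            have h1 : a.val - 1 < a'.val := by
              have := hc1
              simp only [Fin.le_def, ha''] at this
              omega
            have h2 : a'.val ≤ a.val := ha'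
            exact Fin.ext (by omega)
          subst heq
          simp only [hc1, if_false]
          exact hab
      · have hna : ¬ a ≤ a'' := not_le_of_gt ha''lt
        simp [hna]
  -- the set of indices with no partial transversal is nonempty
  have hlastBad : (∀ b, ¬ A ⟨m - 1, Nat.sub_lt hm one_pos⟩ b) := by
    intro b hb
    obtain ⟨x, hx, hxt, -⟩ := hb
    obtain ⟨a, ha⟩ := hc x hx
    exact ha (hxt a (Fin.mk_le_mk.mpr (Nat.le_sub_one_of_lt a.isLt)))
  set BadS : Finset (Fin m) := Finset.univ.filter (fun a => ∀ b, ¬ A a b) with hBadS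
  have hBadne : BadS.Nonempty :=
    ⟨⟨m - 1, Nat.sub_lt hm one_pos⟩, by simp [hBadS, hlastBad]⟩
  set a0 : Fin m := BadS.min' hBadne with ha0
  have ha0Bad : ∀ b, ¬ A a0 b := by
    have := BadS.min'_mem hBadne
    simp only [hBadS, Finset.mem_filter] at this
    exact this.2
  have hlt : ∀ a, a < a0 → ∃ b, A a b := by
    intro a ha
    by_contra hno
    push_neg at hno
    have : a ∈ BadS := by simp [hBadS]; exact hno
    exact absurd (BadS.min'_le a this) (not_le_of_gt ha)
  -- greedy thresholds
  set t : Fin m → Fin n := fun a =>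
    if hne : (Finset.univ.filter (fun b => A a b)).Nonempty then Finset.min' _ hne
    else ⟨0, hn⟩ with ht
  have htA : ∀ a, a < a0 → A a (t a) := by
    intro a ha
    obtain ⟨b, hb⟩ := hlt a ha
    have hne : (Finset.univ.filter (fun b => A a b)).Nonempty := ⟨b, Finset.mem_filter.mpr ⟨Finset.mem_univ _, hb⟩⟩
    have := Finset.min'_mem _ hne
    rw [Finset.mem_filter] at this
    simpa [ht, hne] using this.2
  have htmin : ∀ a b, A a b → t a ≤ b := by
    intro a b hb
    have hne : (Finset.univ.filter (fun b => A a b)).Nonempty := ⟨b, Finset.mem_filter.mpr ⟨Finset.mem_univ _, hb⟩⟩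
    have := Finset.min'_le _ b (Finset.mem_filter.mpr ⟨Finset.mem_univ _, hb⟩)
    simpa [ht, hne] using this
  -- Bob's counter-strategy
  have hne' : ∀ b : Fin n, (Finset.univ.filter (fun a => a0 ≤ a ∨ b < t a)).Nonempty :=
    fun b => ⟨a0, by simp⟩
  set y : Fin n → Fin m := fun b =>
    (Finset.univ.filter (fun a => a0 ≤ a ∨ b < t a)).min' (hne' b) with hy
  have hymono : Monotone y := by
    intro b b' hbb'
    apply Finset.min'_le
    have := Finset.min'_mem _ (hne' b')
    rw [Finset.mem_filter] at this
    rcases this.2 with h1 | h1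
    · simp only [Finset.mem_filter, Finset.mem_univ, true_and]
      exact Or.inl h1
    · simp only [Finset.mem_filter, Finset.mem_univ, true_and]
      exact Or.inr (lt_of_le_of_lt hbb' h1)
  have hnoW : ∀ b : Fin n, ((y b, b) : Fin m × Fin n) ∉ W := by
    intro b hW'
    set a : Fin m := y b with hadef
    have ha_mem := Finset.min'_mem _ (hne' b)
    rw [Finset.mem_filter] at ha_mem
    have ha_le : a ≤ a0 := Finset.min'_le _ a0 (by simp)
    have hprev : ∀ a' < a, ∃ b' ≤ b, A a' b' := by
      intro a' ha'
      have hnotmem : ¬ (a0 ≤ a' ∨ b < t a') := by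
        intro hmem
        have : a ≤ a' := Finset.min'_le _ a' (Finset.mem_filter.mpr ⟨Finset.mem_univ _, hmem⟩)
        exact absurd this (not_le_of_gt ha')
      push_neg at hnotmem
      have ha'lt : a' < a0 := lt_of_lt_of_le ha' ha_le
      exact ⟨t a', hnotmem.2, htA a' ha'lt⟩
    have hAab : A a b := ext a b hW' hprev
    by_cases heq : a = a0
    · exact ha0Bad b (heq ▸ hAab)
    · have halt : a < a0 := lt_of_le_of_ne ha_le heq
      rcases ha_mem.2 with h1 | h1
      · exact absurd h1 (not_le_of_gt halt)
      · exact absurd (htmin a b hAab) (not_le_of_gt h1)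
  obtain ⟨b, hb⟩ := h' y hymono
  exact hnoW b hb
end

section
/- Let m, n be positive integers. For every subset W ⊆ Fin m × Fin n, exactly one of the following holds: (1) there exists a monotone map x : Fin m → Fin n such that for every monotone map y : Fin n → Fin m all deals of (x,y) lie in W; or (2) there exists a monotone map y : Fin n → Fin m such that for every monotone map x : Fin m → Fin n all deals of (x,y) lie in the complement of W. (That is, the monotone bargaining game correspondence G_{m,n} is tight.) -/
/-!
Call a monotone `x : Fin m → Fin n` whose graph lies in `W` an Alice staircase, and a monotone
`y : Fin n → Fin m` whose graph avoids `W` a Bob staircase. Alice is effective for `W` iff an Alice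
staircase exists (against a non-staircase, Bob answers with the constant strategy at a row where
the graph leaves `W`), and dually for Bob. The two cannot coexist, since the monotone self-map
`y ∘ x` of `Fin m` has a fixed point by Tarski's theorem, and this fixed point yields a deal inside
both graphs. If no Alice staircase exists, let `y b` be the first row that cannot be reached from
row `0` by a partial Alice staircase staying in columns `≤ b`; then `y` is monotone and `(y b, b)`
is never in `W`, for otherwise the staircase reaching the previous row could be extended by `b`.
-/

section Effectivity

variable {α β : Type*} [Preorder α] [Preorder β]

def AliceEffective (V : Set (α × β)) : Prop :=
  ∃ x : α → β, Monotone x ∧ ∀ y : β → α, Monotone y →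
    ∀ p : α × β, x p.1 = p.2 → y p.2 = p.1 → p ∈ V

def BobEffective (V : Set (α × β)) : Prop :=
  ∃ y : β → α, Monotone y ∧ ∀ x : α → β, Monotone x →
    ∀ p : α × β, x p.1 = p.2 → y p.2 = p.1 → p ∈ V

theorem aliceEffective_iff {V : Set (α × β)} :
    AliceEffective V ↔ ∃ x : α → β, Monotone x ∧ ∀ a, (a, x a) ∈ V := by
  constructor
  · rintro ⟨x, hx, hV⟩
    exact ⟨x, hx, fun a => hV (fun _ => a) monotone_const (a, x a) rfl rfl⟩
  · rintro ⟨x, hx, hV⟩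
    refine ⟨x, hx, ?_⟩
    rintro y - ⟨a, b⟩ (rfl : x a = b) -
    exact hV a

theorem bobEffective_iff {V : Set (α × β)} :
    BobEffective V ↔ ∃ y : β → α, Monotone y ∧ ∀ b, (y b, b) ∈ V := by
  constructor
  · rintro ⟨y, hy, hV⟩
    exact ⟨y, hy, fun b => hV (fun _ => b) monotone_const (y b, b) rfl rfl⟩
  · rintro ⟨y, hy, hV⟩
    refine ⟨y, hy, ?_⟩
    rintro x - ⟨a, b⟩ - (rfl : y b = a)
    exact hV b

end Effectivity

theorem Monotone.exists_fixed_point_of_finite {α : Type*} [Lattice α] [Finite α] [Nonempty α]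
    {f : α → α} (hf : Monotone f) : ∃ a, f a = a := by
  let := Fintype.ofFinite α
  let := Fintype.toBoundedOrder α
  let := Fintype.toCompleteLattice α
  exact ⟨_, OrderHom.map_lfp ⟨f, hf⟩⟩

section Staircase

variable {α β : Type*} [LinearOrder α] [Preorder β]

def ReachableBelow (W : Set (α × β)) (a : α) (b : β) : Prop :=
  ∃ x : α → β, Monotone x ∧ ∀ a' ≤ a, (a', x a') ∈ W ∧ x a' ≤ b

theorem ReachableBelow.mono_right {W : Set (α × β)} {a : α} {b b' : β}
    (h : ReachableBelow W a b) (hb : b ≤ b') : ReachableBelow W a b' :=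
  let ⟨x, hx, hW⟩ := h
  ⟨x, hx, fun a' ha' => ⟨(hW a' ha').1, (hW a' ha').2.trans hb⟩⟩

theorem ReachableBelow.extend {W : Set (α × β)} {a : α} {b : β} (x : α → β) (hx : Monotone x)
    (hW : ∀ a' < a, (a', x a') ∈ W ∧ x a' ≤ b) (hab : (a, b) ∈ W) : ReachableBelow W a b := by
  refine ⟨fun t => if t < a then x t else b, fun s t hst => ?_, fun a' ha' => ?_⟩
  · dsimp only
    split_ifs with hs ht ht
    · exact hx hst
    · exact (hW s hs).2
    · exact absurd (hst.trans_lt ht) hs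
    · exact le_rfl
  · rcases ha'.lt_or_eq with ha' | rfl
    · simpa [ha'] using hW a' ha'
    · simpa using hab

theorem reachableBelow_of_forall_lt [Finite α] {W : Set (α × β)} {a : α} {b : β}
    (h : ∀ a' < a, ReachableBelow W a' b) (hab : (a, b) ∈ W) : ReachableBelow W a b := by
  by_cases hlt : {a' | a' < a}.Nonempty
  · -- a staircase reaching the predecessor of `a` serves all rows below `a`
    obtain ⟨a₀, ha₀, hmax⟩ := Set.exists_max_image _ id (Set.toFinite _) hlt
    obtain ⟨x, hx, hW⟩ := h a₀ ha₀
    exact .extend x hx (fun a' ha' => hW a' (hmax a' ha')) hab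
  · exact .extend (fun _ => b) monotone_const (fun a' ha' => absurd ⟨a', ha'⟩ hlt) hab

theorem exists_monotone_graph_subset_or_avoiding [Finite α] [Nonempty α] (W : Set (α × β)) :
    (∃ x : α → β, Monotone x ∧ ∀ a, (a, x a) ∈ W) ∨
      ∃ y : β → α, Monotone y ∧ ∀ b, (y b, b) ∉ W := by
  by_cases hstair : ∃ x : α → β, Monotone x ∧ ∀ a, (a, x a) ∈ W
  · exact .inl hstair
  right
  have hfirst : ∀ b, ∃ a, ¬ReachableBelow W a b ∧ ∀ a' < a, ReachableBelow W a' b := by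
    intro b
    obtain ⟨top, htop⟩ := Finite.exists_max (id : α → α)
    have hne : {a | ¬ReachableBelow W a b}.Nonempty :=
      ⟨top, fun ⟨x, hx, hW⟩ => hstair ⟨x, hx, fun a => (hW a (htop a)).1⟩⟩
    obtain ⟨a, ha, hmin⟩ := wellFounded_lt.has_min _ hne
    exact ⟨a, ha, fun a' ha' => not_not.mp fun h => hmin a' h ha'⟩
  choose y hy_not hy_lt using hfirst
  refine ⟨y, fun b b' hbb' => ?_, fun b hb => hy_not b (reachableBelow_of_forall_lt (hy_lt b) hb)⟩
  by_contra! hlt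
  exact hy_not b' ((hy_lt b (y b') hlt).mono_right hbb')

end Staircase

theorem monotone_bargaining_tight_general
    (m n : ℕ) (hm : 0 < m)
    (W : Set (Fin m × Fin n)) :
    Xor'
      (∃ x : Fin m → Fin n, Monotone x ∧
        ∀ y : Fin n → Fin m, Monotone y →
          ∀ p : Fin m × Fin n, x p.1 = p.2 → y p.2 = p.1 → p ∈ W)
      (∃ y : Fin n → Fin m, Monotone y ∧
        ∀ x : Fin m → Fin n, Monotone x →
          ∀ p : Fin m × Fin n, x p.1 = p.2 → y p.2 = p.1 → p ∈ Wᶜ) := by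
  have : Nonempty (Fin m) := ⟨⟨0, hm⟩⟩
  show Xor (AliceEffective W) (BobEffective Wᶜ)
  rw [aliceEffective_iff, bobEffective_iff, xor_iff_or_and_not_and]
  refine ⟨exists_monotone_graph_subset_or_avoiding W, ?_⟩
  rintro ⟨⟨x, hx, hxW⟩, y, hy, hyW⟩
  obtain ⟨a, ha⟩ := (hy.comp hx).exists_fixed_point_of_finite
  have hdeal : y (x a) = a := ha
  exact hyW (x a) (by rw [hdeal]; exact hxW a)

/-- Tightness of the monotone bargaining game correspondence: for every set
`W` of outcomes, exactly one of the two players is effective for his/her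
part (`W` for Alice, the complement of `W` for Bob). -/
theorem monotone_bargaining_tight
    (m n : ℕ) (hm : 0 < m) (hn : 0 < n)
    (W : Set (Fin m × Fin n)) :
    Xor'
      (∃ x : Fin m → Fin n, Monotone x ∧
        ∀ y : Fin n → Fin m, Monotone y →
          ∀ p : Fin m × Fin n, x p.1 = p.2 → y p.2 = p.1 → p ∈ W)
      (∃ y : Fin n → Fin m, Monotone y ∧
        ∀ x : Fin m → Fin n, Monotone x →
          ∀ p : Fin m × Fin n, x p.1 = p.2 → y p.2 = p.1 → p ∈ Wᶜ) :=
  monotone_bargaining_tight_general m n hm W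
end

section
/- Let m, n be positive integers, let X be the set of monotone maps Fin m → Fin n and Y the set of monotone maps Fin n → Fin m, and let g : X × Y → Fin m × Fin n be any map such that g(x,y) is a deal of (x,y) for all (x,y) (a monotone bargaining game form). Then g is Nash-solvable: for all utility functions u_A, u_B : Fin m × Fin n → ℝ there exists (x,y) ∈ X × Y such that u_A (g(x',y)) ≤ u_A (g(x,y)) for all x' ∈ X and u_B (g(x,y')) ≤ u_B (g(x,y)) for all y' ∈ Y. -/
open Finset

/-- Every member of a family of finsets contains a minimal member. -/
lemma mb_exists_min_mem {α : Type*} [DecidableEq α] (R : Set (Finset α)) :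
    ∀ (N : ℕ) (r : Finset α), r.card ≤ N → r ∈ R →
    ∃ rm ∈ R, rm ⊆ r ∧ ∀ r' ∈ R, r' ⊆ rm → r' = rm := by
  intro N
  induction N with
  | zero =>
    intro r hcard hmem
    have hr0 : r = ∅ := Finset.card_eq_zero.mp (Nat.le_zero.mp hcard)
    refine ⟨r, hmem, subset_rfl, ?_⟩
    intro r' _ hs
    rw [hr0] at hs ⊢
    exact Finset.subset_empty.mp hs
  | succ N ih =>
    intro r hcard hmem
    by_cases h : ∀ r' ∈ R, r' ⊆ r → r' = r
    · exact ⟨r, hmem, subset_rfl, h⟩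
    · push_neg at h
      obtain ⟨r', hr', hsub, hne⟩ := h
      have hlt : r'.card ≤ N := by
        have hss : r' ⊂ r := HasSubset.Subset.ssubset_of_ne hsub hne
        have := Finset.card_lt_card hss
        omega
      obtain ⟨rm, h1, h2, h3⟩ := ih r' hlt hr'
      exact ⟨rm, h1, h2.trans hsub, h3⟩

/-- Abstract Nash-solvability theorem for "tight" dual families of subsets. -/
lemma mb_thmH {α : Type*} [DecidableEq α] (u1 u2 : α → ℝ) :
    ∀ (N : ℕ) (U : Finset α) (R C : Set (Finset α)),
    U.card ≤ N →
    R.Nonempty → C.Nonempty →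
    (∀ r ∈ R, r ⊆ U) → (∀ c ∈ C, c ⊆ U) →
    (∀ r ∈ R, ∀ c ∈ C, (r ∩ c).Nonempty) →
    (∀ W : Finset α, W ⊆ U → (∃ r ∈ R, r ⊆ W) ∨ (∃ c ∈ C, ∀ p ∈ c, p ∉ W)) →
    ∃ r ∈ R, ∃ c ∈ C, ∀ o ∈ r ∩ c,
      (∀ p ∈ c, u1 p ≤ u1 o) ∧ (∀ p ∈ r, u2 p ≤ u2 o) := by
  intro N
  induction N with
  | zero =>
    intro U R C hcard hR hC hRU hCU hT0 hT1
    exfalso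
    obtain ⟨r, hr⟩ := hR
    obtain ⟨c, hc⟩ := hC
    obtain ⟨p, hp⟩ := hT0 r hr c hc
    have hpU : p ∈ U := hRU r hr (Finset.mem_inter.mp hp).1
    have : 0 < U.card := Finset.card_pos.mpr ⟨p, hpU⟩
    omega
  | succ N ih =>
    intro U R C hcard hR hC hRU hCU hT0 hT1
    obtain ⟨r0, hr0⟩ := hR
    obtain ⟨c0, hc0⟩ := hC
    obtain ⟨p0, hp0⟩ := hT0 r0 hr0 c0 hc0
    have hU : U.Nonempty := ⟨p0, hRU r0 hr0 (Finset.mem_inter.mp hp0).1⟩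
    classical
    set A : Finset α := U.filter (fun p => ∀ q ∈ U, u1 q ≤ u1 p) with hAdef
    have hAU : A ⊆ U := Finset.filter_subset _ _
    have hAne : A.Nonempty := by
      obtain ⟨p, hpU, hpmax⟩ := U.exists_max_image u1 hU
      exact ⟨p, Finset.mem_filter.mpr ⟨hpU, hpmax⟩⟩
    by_cases hcase : ∃ rm ∈ R, (∀ r' ∈ R, r' ⊆ rm → r' = rm) ∧
        ∃ o ∈ rm, o ∈ A ∧ ∀ p ∈ rm, u2 p ≤ u2 o
    · -- a minimal row whose u2-max lies in the u1-argmax set A : immediate solution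
      obtain ⟨rm, hrm, hmin, o, ho, hoA, ho2⟩ := hcase
      have hW : rm.erase o ⊆ U := (Finset.erase_subset _ _).trans (hRU rm hrm)
      rcases hT1 (rm.erase o) hW with ⟨r', hr', hsub⟩ | ⟨c, hc, hcav⟩
      · exfalso
        obtain ⟨rm', hrm', hsub', hmin'⟩ := mb_exists_min_mem R r'.card r' le_rfl hr'
        have h1 : rm' ⊆ rm := hsub'.trans (hsub.trans (Finset.erase_subset _ _))
        have heq : rm' = rm := hmin rm' hrm' h1
        have ho' : o ∈ rm' := heq ▸ ho
        exact (Finset.mem_erase.mp (hsub (hsub' ho'))).1 rfl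
      · refine ⟨rm, hrm, c, hc, ?_⟩
        intro p hp
        have hpo : p = o := by
          by_contra hne
          exact hcav p (Finset.mem_inter.mp hp).2
            (Finset.mem_erase.mpr ⟨hne, (Finset.mem_inter.mp hp).1⟩)
        subst hpo
        constructor
        · intro q hq
          exact (Finset.mem_filter.mp hoA).2 q (hCU c hc hq)
        · exact ho2
    · -- every minimal row attains its u2-max outside A : recurse on U \ A
      push_neg at hcase
      have hpeak : ∀ rm ∈ R, (∀ r' ∈ R, r' ⊆ rm → r' = rm) →
          ∃ q ∈ rm, q ∉ A ∧ ∀ p ∈ rm, u2 p ≤ u2 q := by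
        intro rm hrm hmin
        have hrmne : rm.Nonempty := by
          obtain ⟨p, hp⟩ := hT0 rm hrm c0 hc0
          exact ⟨p, (Finset.mem_inter.mp hp).1⟩
        obtain ⟨q, hq, hqmax⟩ := rm.exists_max_image u2 hrmne
        refine ⟨q, hq, ?_, hqmax⟩
        intro hqA
        obtain ⟨p, hp, hlt⟩ := hcase rm hrm hmin q hq hqA
        exact absurd (hqmax p hp) (not_le.mpr hlt)
      set U' : Finset α := U \ A with hU'def
      set R' : Set (Finset α) :=
        {s | ∃ rm, rm ∈ R ∧ (∀ r' ∈ R, r' ⊆ rm → r' = rm) ∧ s = rm \ A} with hR'def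
      set C' : Set (Finset α) := {c | c ∈ C ∧ ∀ p ∈ c, p ∉ A} with hC'def
      have hcard' : U'.card ≤ N := by
        have hss : U' ⊂ U := by
          obtain ⟨a, ha⟩ := hAne
          refine Finset.ssubset_iff_of_subset (Finset.sdiff_subset) |>.mpr ?_
          exact ⟨a, hAU ha, fun hmem => (Finset.mem_sdiff.mp hmem).2 ha⟩
        have := Finset.card_lt_card hss
        omega
      have hR' : R'.Nonempty := by
        obtain ⟨rm, hrm, _, hmin⟩ := mb_exists_min_mem R r0.card r0 le_rfl hr0
        exact ⟨rm \ A, rm, hrm, hmin, rfl⟩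
      have hC' : C'.Nonempty := by
        rcases hT1 A hAU with ⟨r, hr, hrA⟩ | ⟨c, hc, hcav⟩
        · exfalso
          obtain ⟨rm, hrm, hsub, hmin⟩ := mb_exists_min_mem R r.card r le_rfl hr
          obtain ⟨q, hq, hqA, _⟩ := hpeak rm hrm hmin
          exact hqA (hrA (hsub hq))
        · exact ⟨c, hc, hcav⟩
      have hRU' : ∀ s ∈ R', s ⊆ U' := by
        rintro s ⟨rm, hrm, _, rfl⟩
        exact Finset.sdiff_subset_sdiff (hRU rm hrm) subset_rfl
      have hCU' : ∀ c ∈ C', c ⊆ U' := by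
        rintro c ⟨hc, hcav⟩
        intro p hp
        exact Finset.mem_sdiff.mpr ⟨hCU c hc hp, hcav p hp⟩
      have hT0' : ∀ s ∈ R', ∀ c ∈ C', (s ∩ c).Nonempty := by
        rintro s ⟨rm, hrm, _, rfl⟩ c ⟨hc, hcav⟩
        obtain ⟨p, hp⟩ := hT0 rm hrm c hc
        have hp1 := (Finset.mem_inter.mp hp).1
        have hp2 := (Finset.mem_inter.mp hp).2
        exact ⟨p, Finset.mem_inter.mpr
          ⟨Finset.mem_sdiff.mpr ⟨hp1, hcav p hp2⟩, hp2⟩⟩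
      have hT1' : ∀ W : Finset α, W ⊆ U' →
          (∃ s ∈ R', s ⊆ W) ∨ (∃ c ∈ C', ∀ p ∈ c, p ∉ W) := by
        intro W hWU'
        have hWA : W ∪ A ⊆ U :=
          Finset.union_subset (hWU'.trans Finset.sdiff_subset) hAU
        rcases hT1 (W ∪ A) hWA with ⟨r, hr, hrsub⟩ | ⟨c, hc, hcav⟩
        · left
          obtain ⟨rm, hrm, hsub, hmin⟩ := mb_exists_min_mem R r.card r le_rfl hr
          refine ⟨rm \ A, ⟨rm, hrm, hmin, rfl⟩, ?_⟩
          intro p hp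
          have hp1 := (Finset.mem_sdiff.mp hp).1
          have hp2 := (Finset.mem_sdiff.mp hp).2
          rcases Finset.mem_union.mp (hrsub (hsub hp1)) with h | h
          · exact h
          · exact absurd h hp2
        · right
          refine ⟨c, ⟨hc, fun p hp hpA => hcav p hp (Finset.mem_union_right _ hpA)⟩, ?_⟩
          intro p hp hpW
          exact hcav p hp (Finset.mem_union_left _ hpW)
      obtain ⟨s, hsR', c, hcC', hsol⟩ :=
        ih U' R' C' hcard' hR' hC' hRU' hCU' hT0' hT1'
      obtain ⟨rm, hrm, hmin, rfl⟩ := hsR'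
      obtain ⟨hcC, hcav⟩ := hcC'
      refine ⟨rm, hrm, c, hcC, ?_⟩
      intro o ho
      have ho1 := (Finset.mem_inter.mp ho).1
      have ho2 := (Finset.mem_inter.mp ho).2
      have ho' : o ∈ (rm \ A) ∩ c :=
        Finset.mem_inter.mpr ⟨Finset.mem_sdiff.mpr ⟨ho1, hcav o ho2⟩, ho2⟩
      obtain ⟨hcond1, hcond2⟩ := hsol o ho'
      refine ⟨hcond1, ?_⟩
      intro p hp
      obtain ⟨q, hq, hqA, hqmax⟩ := hpeak rm hrm hmin
      have hqs : q ∈ rm \ A := Finset.mem_sdiff.mpr ⟨hq, hqA⟩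
      exact le_trans (hqmax p hp) (hcond2 q hqs)

/-- Greedy construction: either a monotone transversal of `W` within a subgrid,
or a monotone co-transversal avoiding `W`. -/
lemma mb_greedy (m n : ℕ) (W : ℕ → ℕ → Prop) :
    ∀ (K a0 b0 : ℕ), m - a0 ≤ K → a0 < m → b0 < n →
    (∃ x : ℕ → ℕ, Monotone x ∧ ∀ a, a0 ≤ a → a < m →
        (b0 ≤ x a ∧ x a < n ∧ W a (x a))) ∨
    (∃ y : ℕ → ℕ, Monotone y ∧ ∀ b, b0 ≤ b → b < n →
        (a0 ≤ y b ∧ y b < m ∧ ¬ W (y b) b)) := by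
  intro K
  induction K with
  | zero =>
    intro a0 b0 hK ha hb
    exfalso
    omega
  | succ K ih =>
    intro a0 b0 hK ha hb
    classical
    by_cases H0 : ∃ b, b0 ≤ b ∧ b < n ∧ W a0 b
    · obtain ⟨hbm0, hbmn, hbmW⟩ := Nat.find_spec H0
      set bm := Nat.find H0 with hbmdef
      by_cases hlast : m ≤ a0 + 1
      · left
        refine ⟨fun _ => bm, monotone_const, ?_⟩
        intro a haa ham
        have haeq : a = a0 := by omega
        subst haeq
        exact ⟨hbm0, hbmn, hbmW⟩
      · have ha1 : a0 + 1 < m := by omega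
        have hK1 : m - (a0 + 1) ≤ K := by omega
        rcases ih (a0 + 1) bm hK1 ha1 hbmn with ⟨x, hx, hxc⟩ | ⟨y, hy, hyc⟩
        · left
          refine ⟨fun a => if a ≤ a0 then bm else max bm (x a), ?_, ?_⟩
          · intro a1 a2 h12
            by_cases h2 : a2 ≤ a0
            · have h1 : a1 ≤ a0 := le_trans h12 h2
              simp [h1, h2]
            · by_cases h1 : a1 ≤ a0
              · simp only [if_pos h1, if_neg h2]
                exact le_max_left _ _
              · simp only [if_neg h1, if_neg h2]
                exact max_le_max le_rfl (hx h12)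
          · intro a haa ham
            by_cases h : a ≤ a0
            · have haeq : a = a0 := le_antisymm h haa
              subst haeq
              simp only [if_pos h]
              exact ⟨hbm0, hbmn, hbmW⟩
            · have ha' : a0 + 1 ≤ a := by omega
              obtain ⟨h1, h2, h3⟩ := hxc a ha' ham
              have hmax : max bm (x a) = x a := max_eq_right h1
              simp only [if_neg h, hmax]
              exact ⟨le_trans hbm0 h1, h2, h3⟩
        · right
          refine ⟨fun b => if b < bm then a0 else max a0 (y b), ?_, ?_⟩
          · intro b1 b2 h12
            by_cases h2 : b2 < bm
            · have h1 : b1 < bm := lt_of_le_of_lt h12 h2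
              simp [h1, h2]
            · by_cases h1 : b1 < bm
              · simp only [if_pos h1, if_neg h2]
                exact le_max_left _ _
              · simp only [if_neg h1, if_neg h2]
                exact max_le_max le_rfl (hy h12)
          · intro b hbb hbn
            by_cases h : b < bm
            · simp only [if_pos h]
              refine ⟨le_rfl, ha, ?_⟩
              intro hWb
              exact Nat.find_min H0 h ⟨hbb, hbn, hWb⟩
            · push_neg at h
              obtain ⟨h1, h2, h3⟩ := hyc b h hbn
              have hmax : max a0 (y b) = y b := max_eq_right (by omega)
              simp only [if_neg (not_lt.mpr h), hmax]
              exact ⟨by omega, h2, h3⟩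
    · right
      push_neg at H0
      refine ⟨fun _ => a0, monotone_const, ?_⟩
      intro b hbb hbn
      exact ⟨le_rfl, ha, H0 b hbb hbn⟩

/-- Tightness of the monotone bargaining structure (Fin version). -/
lemma mb_tight_fin (m n : ℕ) (hm : 0 < m) (hn : 0 < n)
    (W : Finset (Fin m × Fin n)) :
    (∃ x : Fin m → Fin n, Monotone x ∧ ∀ a, (a, x a) ∈ W) ∨
    (∃ y : Fin n → Fin m, Monotone y ∧ ∀ b, (y b, b) ∉ W) := by
  classical
  set Wn : ℕ → ℕ → Prop :=
    fun a b => ∃ (ha : a < m) (hb : b < n), ((⟨a, ha⟩ : Fin m), (⟨b, hb⟩ : Fin n)) ∈ W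
    with hWndef
  rcases mb_greedy m n Wn (m - 0) 0 0 le_rfl hm hn with ⟨x, hx, hxc⟩ | ⟨y, hy, hyc⟩
  · left
    have hbnd : ∀ a : Fin m, x a.val < n := fun a =>
      (hxc a.val (Nat.zero_le _) a.isLt).2.1
    refine ⟨fun a => ⟨x a.val, hbnd a⟩, ?_, ?_⟩
    · intro a1 a2 h
      exact Fin.mk_le_mk.mpr (hx (Fin.le_def.mp h))
    · intro a
      obtain ⟨ha', hb', hW⟩ := (hxc a.val (Nat.zero_le _) a.isLt).2.2
      have e1 : (⟨a.val, ha'⟩ : Fin m) = a := by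
        apply Fin.ext; rfl
      rw [e1] at hW
      exact hW
  · right
    have hbnd : ∀ b : Fin n, y b.val < m := fun b =>
      (hyc b.val (Nat.zero_le _) b.isLt).2.1
    refine ⟨fun b => ⟨y b.val, hbnd b⟩, ?_, ?_⟩
    · intro b1 b2 h
      exact Fin.mk_le_mk.mpr (hy (Fin.le_def.mp h))
    · intro b hmem
      refine (hyc b.val (Nat.zero_le _) b.isLt).2.2 ?_
      refine ⟨hbnd b, b.isLt, ?_⟩
      have e1 : (⟨b.val, b.isLt⟩ : Fin n) = b := by
        apply Fin.ext; rfl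
      rw [e1]
      exact hmem

/-- Any pair of monotone maps has a deal (fixed point of the composition). -/
lemma mb_deal (m n : ℕ) (hm : 0 < m) (x : Fin m → Fin n) (hx : Monotone x)
    (y : Fin n → Fin m) (hy : Monotone y) : ∃ a : Fin m, y (x a) = a := by
  classical
  set f : Fin m → Fin m := fun a => y (x a) with hfdef
  have hf : Monotone f := fun a b h => hy (hx h)
  set S : Finset (Fin m) := Finset.univ.filter (fun a => a ≤ f a) with hSdef
  have hS : S.Nonempty := by
    refine ⟨⟨0, hm⟩, Finset.mem_filter.mpr ⟨Finset.mem_univ _, ?_⟩⟩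
    exact Fin.le_def.mpr (Nat.zero_le _)
  have h1 : S.max' hS ≤ f (S.max' hS) :=
    (Finset.mem_filter.mp (S.max'_mem hS)).2
  have h2 : f (S.max' hS) ∈ S :=
    Finset.mem_filter.mpr ⟨Finset.mem_univ _, hf h1⟩
  have h3 : f (S.max' hS) ≤ S.max' hS := S.le_max' _ h2
  exact ⟨S.max' hS, le_antisymm h3 h1⟩

/-- Every monotone bargaining game form is Nash-solvable. -/
theorem monotone_bargaining_game_form_nash_solvable
    (m n : ℕ) (hm : 0 < m) (hn : 0 < n)
    (g : {x : Fin m → Fin n // Monotone x} →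
         {y : Fin n → Fin m // Monotone y} → Fin m × Fin n)
    (hg : ∀ x y, x.val (g x y).1 = (g x y).2 ∧ y.val (g x y).2 = (g x y).1)
    (uA uB : Fin m × Fin n → ℝ) :
    ∃ (x : {x : Fin m → Fin n // Monotone x})
      (y : {y : Fin n → Fin m // Monotone y}),
      (∀ x', uA (g x' y) ≤ uA (g x y)) ∧
      (∀ y', uB (g x y') ≤ uB (g x y)) := by
  classical
  set Rset : {x : Fin m → Fin n // Monotone x} → Finset (Fin m × Fin n) :=
    fun x => Finset.univ.image (fun a => (a, x.val a)) with hRsetdef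
  set Cset : {y : Fin n → Fin m // Monotone y} → Finset (Fin m × Fin n) :=
    fun y => Finset.univ.image (fun b => (y.val b, b)) with hCsetdef
  set R : Set (Finset (Fin m × Fin n)) := Set.range Rset with hRdef
  set C : Set (Finset (Fin m × Fin n)) := Set.range Cset with hCdef
  have hT0 : ∀ r ∈ R, ∀ c ∈ C, (r ∩ c).Nonempty := by
    rintro _ ⟨x, rfl⟩ _ ⟨y, rfl⟩
    obtain ⟨a, hA⟩ := mb_deal m n hm x.1 x.2 y.1 y.2
    refine ⟨(a, x.1 a), Finset.mem_inter.mpr ⟨?_, ?_⟩⟩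
    · exact Finset.mem_image.mpr ⟨a, Finset.mem_univ _, rfl⟩
    · refine Finset.mem_image.mpr ⟨x.1 a, Finset.mem_univ _, ?_⟩
      rw [hA]
  have hT1 : ∀ Wf : Finset (Fin m × Fin n), Wf ⊆ Finset.univ →
      (∃ r ∈ R, r ⊆ Wf) ∨ (∃ c ∈ C, ∀ p ∈ c, p ∉ Wf) := by
    intro Wf _
    rcases mb_tight_fin m n hm hn Wf with ⟨x, hx, hxc⟩ | ⟨y, hy, hyc⟩
    · left
      refine ⟨Rset ⟨x, hx⟩, ⟨⟨x, hx⟩, rfl⟩, ?_⟩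
      intro p hp
      obtain ⟨a, _, rfl⟩ := Finset.mem_image.mp hp
      exact hxc a
    · right
      refine ⟨Cset ⟨y, hy⟩, ⟨⟨y, hy⟩, rfl⟩, ?_⟩
      intro p hp
      obtain ⟨b, _, rfl⟩ := Finset.mem_image.mp hp
      exact hyc b
  have hRne : R.Nonempty := ⟨Rset ⟨fun _ => ⟨0, hn⟩, monotone_const⟩, ⟨_, rfl⟩⟩
  have hCne : C.Nonempty := ⟨Cset ⟨fun _ => ⟨0, hm⟩, monotone_const⟩, ⟨_, rfl⟩⟩
  obtain ⟨r, hrR, c, hcC, hsol⟩ :=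
    mb_thmH uA uB (Finset.univ : Finset (Fin m × Fin n)).card Finset.univ R C le_rfl
      hRne hCne (fun r _ => Finset.subset_univ r) (fun c _ => Finset.subset_univ c)
      hT0 hT1
  obtain ⟨x, rfl⟩ := hrR
  obtain ⟨y, rfl⟩ := hcC
  have hoR : g x y ∈ Rset x := by
    refine Finset.mem_image.mpr ⟨(g x y).1, Finset.mem_univ _, ?_⟩
    rw [(hg x y).1]
  have hoC : g x y ∈ Cset y := by
    refine Finset.mem_image.mpr ⟨(g x y).2, Finset.mem_univ _, ?_⟩
    rw [(hg x y).2]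
  have hcond := hsol (g x y) (Finset.mem_inter.mpr ⟨hoR, hoC⟩)
  refine ⟨x, y, ?_, ?_⟩
  · intro x'
    have ho'C : g x' y ∈ Cset y := by
      refine Finset.mem_image.mpr ⟨(g x' y).2, Finset.mem_univ _, ?_⟩
      rw [(hg x' y).2]
    exact hcond.1 (g x' y) ho'C
  · intro y'
    have ho'R : g x y' ∈ Rset x := by
      refine Finset.mem_image.mpr ⟨(g x y').1, Finset.mem_univ _, ?_⟩
      rw [(hg x y').1]
    exact hcond.2 (g x y') ho'R
end

section
/- Let O be a finite set, X and Y nonempty (finite) index sets, and C : X → Set O, D : Y → Set O two hypergraphs on O. Then the following three conjunctions are equivalent: (i) and (t); (i) and (t'); (i) and (t''). -/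
/-- Theorem 2 (duality of hypergraphs): the conjunctions
`(i) ∧ (t)`, `(i) ∧ (t')` and `(i) ∧ (t'')` are pairwise equivalent. -/
theorem hypergraph_duality_equivalences
    {O X Y : Type*} [Fintype O] [Fintype X] [Fintype Y]
    [Nonempty X] [Nonempty Y]
    (C : X → Set O) (D : Y → Set O) :
    (((∀ x y, (C x ∩ D y).Nonempty) ∧
      (∀ C' D' : Set O, (∀ y, (C' ∩ D y).Nonempty) →
        (∀ x, (D' ∩ C x).Nonempty) → (C' ∩ D').Nonempty))
     ↔ ((∀ x y, (C x ∩ D y).Nonempty) ∧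
        (∀ D' : Set O, (∀ x, (D' ∩ C x).Nonempty) → ∃ y, D y ⊆ D')))
    ∧
    (((∀ x y, (C x ∩ D y).Nonempty) ∧
      (∀ D' : Set O, (∀ x, (D' ∩ C x).Nonempty) → ∃ y, D y ⊆ D'))
     ↔ ((∀ x y, (C x ∩ D y).Nonempty) ∧
        (∀ C' : Set O, (∀ y, (C' ∩ D y).Nonempty) → ∃ x, C x ⊆ C'))) := by
  have h1 : ((∀ x y, (C x ∩ D y).Nonempty) ∧
      (∀ C' D' : Set O, (∀ y, (C' ∩ D y).Nonempty) →
        (∀ x, (D' ∩ C x).Nonempty) → (C' ∩ D').Nonempty))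
     ↔ ((∀ x y, (C x ∩ D y).Nonempty) ∧
        (∀ D' : Set O, (∀ x, (D' ∩ C x).Nonempty) → ∃ y, D y ⊆ D')) := by
    constructor
    · rintro ⟨hi, ht⟩
      refine ⟨hi, fun D' hD' => ?_⟩
      by_contra h
      push_neg at h
      have hC' : ∀ y, (D'ᶜ ∩ D y).Nonempty := fun y => by
        rcases Set.not_subset.mp (h y) with ⟨o, ho, ho'⟩
        exact ⟨o, ho', ho⟩
      obtain ⟨o, ho1, ho2⟩ := ht D'ᶜ D' hC' hD'
      exact ho1 ho2
    · rintro ⟨hi, ht'⟩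
      refine ⟨hi, fun C' D' hC' hD' => ?_⟩
      obtain ⟨y, hy⟩ := ht' D' hD'
      obtain ⟨o, hoC, hoD⟩ := hC' y
      exact ⟨o, hoC, hy hoD⟩
  have h2 : ((∀ x y, (C x ∩ D y).Nonempty) ∧
      (∀ C' D' : Set O, (∀ y, (C' ∩ D y).Nonempty) →
        (∀ x, (D' ∩ C x).Nonempty) → (C' ∩ D').Nonempty))
     ↔ ((∀ x y, (C x ∩ D y).Nonempty) ∧
        (∀ C' : Set O, (∀ y, (C' ∩ D y).Nonempty) → ∃ x, C x ⊆ C')) := by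
    constructor
    · rintro ⟨hi, ht⟩
      refine ⟨hi, fun C' hC' => ?_⟩
      by_contra h
      push_neg at h
      have hD' : ∀ x, (C'ᶜ ∩ C x).Nonempty := fun x => by
        rcases Set.not_subset.mp (h x) with ⟨o, ho, ho'⟩
        exact ⟨o, ho', ho⟩
      obtain ⟨o, ho1, ho2⟩ := ht C' C'ᶜ hC' hD'
      exact ho2 ho1
    · rintro ⟨hi, ht''⟩
      refine ⟨hi, fun C' D' hC' hD' => ?_⟩
      obtain ⟨x, hx⟩ := ht'' C' hC'
      obtain ⟨o, hoD, hoC⟩ := hD' x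
      exact ⟨o, hx hoC, hoD⟩
  exact ⟨h1, h1.symm.trans h2⟩
end

section
/- Let G : X → Y → Set O be a tight game correspondence (X, Y, O finite nonempty, G x y ≠ ∅ for all x, y, and the hypergraphs C x = ⋃_y G x y and D y = ⋃_x G x y satisfy (t') and (t'')). Then for all utility functions u_A, u_B : O → ℝ there exist x* ∈ X, y* ∈ Y and o* ∈ O such that G x* y* = {o*}, every o' ∈ G x' y* for any x' ∈ X satisfies u_A o' ≤ u_A o*, and every o' ∈ G x* y' for any y' ∈ Y satisfies u_B o' ≤ u_B o*. (Every tight game correspondence has a simple Nash equilibrium for every payoff, which is a Nash equilibrium of every game form g ∈ G.) -/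
/-!
Refine the payoffs to injective ones and argue by induction on the size of a subgame `(R, S)`
(rows `R`, columns `S`). Let `a` be A's maximin value. The rows guaranteeing `a` to A form again a
tight subgame. If they are not all rows, an equilibrium `(x, y, o)` of the smaller subgame lifts:
by (t') some column `y'` punishes every deviation of A, and the row of `x` meets it only in `o`.
Symmetrically for B. Otherwise, by injectivity, every row contains A's maximin outcome `q` and
every column B's maximin outcome `p`; tightness yields a column equal to `{q}` and a row equal to
`{p}`, which meet, so `p = q` and they form a simple equilibrium. The lifting step needs the
stronger invariant that the row and the column of the equilibrium meet only in `o`.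
-/

open Set Function

section TightGames

variable {X Y O α β : Type*} {G : X → Y → Set O} {R : Set X} {S : Set Y}

def rowOutcomes (G : X → Y → Set O) (S : Set Y) (x : X) : Set O := ⋃ y ∈ S, G x y

def colOutcomes (G : X → Y → Set O) (R : Set X) (y : Y) : Set O := ⋃ x ∈ R, G x y

theorem mem_rowOutcomes {x : X} {o : O} : o ∈ rowOutcomes G S x ↔ ∃ y ∈ S, o ∈ G x y := by
  simp [rowOutcomes]

theorem mem_colOutcomes {y : Y} {o : O} : o ∈ colOutcomes G R y ↔ ∃ x ∈ R, o ∈ G x y := by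
  simp [colOutcomes]

theorem colOutcomes_mono {R' : Set X} (h : R' ⊆ R) (y : Y) :
    colOutcomes G R' y ⊆ colOutcomes G R y :=
  biUnion_subset_biUnion_left h

theorem subset_rowOutcomes_inter_colOutcomes {x : X} {y : Y} (hx : x ∈ R) (hy : y ∈ S) :
    G x y ⊆ rowOutcomes G S x ∩ colOutcomes G R y :=
  fun _ ho => ⟨mem_rowOutcomes.2 ⟨y, hy, ho⟩, mem_colOutcomes.2 ⟨x, hx, ho⟩⟩

/-- Tightness (t') and (t'') of the subgame with rows `R` and columns `S`. -/
def IsTightOn (G : X → Y → Set O) (R : Set X) (S : Set Y) : Prop :=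
  (∀ D : Set O, (∀ x ∈ R, (D ∩ rowOutcomes G S x).Nonempty) →
    ∃ y ∈ S, colOutcomes G R y ⊆ D) ∧
  (∀ C : Set O, (∀ y ∈ S, (C ∩ colOutcomes G R y).Nonempty) →
    ∃ x ∈ R, rowOutcomes G S x ⊆ C)

theorem IsTightOn.swap (h : IsTightOn G R S) : IsTightOn (swap G) S R :=
  ⟨h.2, h.1⟩

structure IsSimpleNashEqOn [LE α] [LE β] (G : X → Y → Set O) (vA : O → α) (vB : O → β)
    (R : Set X) (S : Set Y) (x : X) (y : Y) (o : O) : Prop where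
  mem_rows : x ∈ R
  mem_cols : y ∈ S
  inter_eq : rowOutcomes G S x ∩ colOutcomes G R y = {o}
  le_of_mem_col : ∀ o' ∈ colOutcomes G R y, vA o' ≤ vA o
  le_of_mem_row : ∀ o' ∈ rowOutcomes G S x, vB o' ≤ vB o

namespace IsSimpleNashEqOn

variable [LE α] [LE β] {vA : O → α} {vB : O → β} {x : X} {y : Y} {o : O}

theorem swap (h : IsSimpleNashEqOn G vA vB R S x y o) :
    IsSimpleNashEqOn (swap G) vB vA S R y x o where
  mem_rows := h.mem_cols
  mem_cols := h.mem_rows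
  inter_eq := by rw [inter_comm]; exact h.inter_eq
  le_of_mem_col := h.le_of_mem_row
  le_of_mem_row := h.le_of_mem_col

theorem mem_rowOutcomes (h : IsSimpleNashEqOn G vA vB R S x y o) : o ∈ rowOutcomes G S x :=
  (h.inter_eq.symm ▸ rfl : o ∈ rowOutcomes G S x ∩ colOutcomes G R y).1

theorem eq_of_mem (h : IsSimpleNashEqOn G vA vB R S x y o) {o' : O}
    (hr : o' ∈ rowOutcomes G S x) (hc : o' ∈ colOutcomes G R y) : o' = o :=
  (eq_singleton_iff_unique_mem.1 h.inter_eq).2 o' ⟨hr, hc⟩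

theorem eq_singleton (hG : ∀ x y, (G x y).Nonempty) (h : IsSimpleNashEqOn G vA vB R S x y o) :
    G x y = {o} :=
  (hG x y).subset_singleton_iff.1 <| h.inter_eq ▸
    subset_rowOutcomes_inter_colOutcomes h.mem_rows h.mem_cols

end IsSimpleNashEqOn

theorem IsTightOn.exists_isSimpleNashEqOn_of_forall_mem [Preorder α] [Preorder β]
    {vA : O → α} {vB : O → β} (hG : ∀ x y, (G x y).Nonempty) (hT : IsTightOn G R S)
    {p q : O} (hq : ∀ x ∈ R, q ∈ rowOutcomes G S x)
    (hp : ∀ y ∈ S, p ∈ colOutcomes G R y) :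
    ∃ x y, IsSimpleNashEqOn G vA vB R S x y q := by
  obtain ⟨y, hy, hyq⟩ := hT.1 {q} fun x hx => ⟨q, rfl, hq x hx⟩
  obtain ⟨x, hx, hxp⟩ := hT.2 {p} fun y hy => ⟨p, rfl, hp y hy⟩
  obtain ⟨o, ho⟩ := hG x y
  obtain ⟨hrow, hcol⟩ := subset_rowOutcomes_inter_colOutcomes hx hy ho
  obtain rfl : p = q := (hxp hrow).symm.trans (hyq hcol)
  refine ⟨x, y, hx, hy, ?_, fun o' ho' => ?_, fun o' ho' => ?_⟩
  · have hne : (rowOutcomes G S x ∩ colOutcomes G R y).Nonempty := ⟨o, hrow, hcol⟩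
    exact hne.subset_singleton_iff.1 fun o' ho' => hyq ho'.2
  · rw [hyq ho']
  · rw [hxp ho']

section Guaranteeing

variable [LinearOrder α]

def guaranteeingRows (G : X → Y → Set O) (v : O → α) (R : Set X) (S : Set Y) (a : α) :
    Set X :=
  {x ∈ R | ∀ o ∈ rowOutcomes G S x, a ≤ v o}

variable {v : O → α} {a : α}

theorem guaranteeingRows_subset : guaranteeingRows G v R S a ⊆ R :=
  sep_subset _ _

theorem exists_lt_of_notMem_guaranteeingRows {x : X} (hx : x ∈ R)
    (hx' : x ∉ guaranteeingRows G v R S a) : ∃ o ∈ rowOutcomes G S x, v o < a := by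
  simpa [guaranteeingRows, hx] using hx'

theorem le_of_mem_colOutcomes_guaranteeingRows {y : Y} (hy : y ∈ S) {o : O}
    (ho : o ∈ colOutcomes G (guaranteeingRows G v R S a) y) : a ≤ v o := by
  obtain ⟨x, hx, hox⟩ := mem_colOutcomes.1 ho
  exact hx.2 o (mem_rowOutcomes.2 ⟨y, hy, hox⟩)

theorem IsTightOn.restrict_guaranteeingRows (hT : IsTightOn G R S) (v : O → α) (a : α) :
    IsTightOn G (guaranteeingRows G v R S a) S := by
  have hcol (y : Y) : colOutcomes G (guaranteeingRows G v R S a) y ⊆ colOutcomes G R y :=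
    colOutcomes_mono guaranteeingRows_subset y
  constructor
  · intro D hD
    obtain ⟨y, hy, hyD⟩ := hT.1 (D ∪ {o | v o < a}) fun x hx => by
      by_cases hx' : x ∈ guaranteeingRows G v R S a
      · exact (hD x hx').mono (inter_subset_inter_left _ subset_union_left)
      · obtain ⟨o, ho, hlt⟩ := exists_lt_of_notMem_guaranteeingRows hx hx'
        exact ⟨o, Or.inr hlt, ho⟩
    refine ⟨y, hy, fun o ho => ?_⟩
    exact (hyD (hcol y ho)).resolve_right (le_of_mem_colOutcomes_guaranteeingRows hy ho).not_gt
  · intro C hC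
    obtain ⟨x, hx, hxC⟩ := hT.2 (C ∩ {o | a ≤ v o}) fun y hy => by
      obtain ⟨o, hoC, ho⟩ := hC y hy
      exact ⟨o, ⟨hoC, le_of_mem_colOutcomes_guaranteeingRows hy ho⟩, hcol y ho⟩
    exact ⟨x, ⟨hx, fun o ho => (hxC ho).2⟩, fun o ho => (hxC ho).1⟩

theorem exists_maximin [Finite X] [Finite O] (hG : ∀ x y, (G x y).Nonempty)
    (hR : R.Nonempty) (hS : S.Nonempty) (v : O → α) :
    ∃ q, (guaranteeingRows G v R S (v q)).Nonempty ∧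
      ∀ x ∈ R, ∃ o ∈ rowOutcomes G S x, v o ≤ v q := by
  have hne (x : X) : (rowOutcomes G S x).Nonempty := by
    obtain ⟨y, hy⟩ := hS
    obtain ⟨o, ho⟩ := hG x y
    exact ⟨o, mem_rowOutcomes.2 ⟨y, hy, ho⟩⟩
  choose m hm hmin using fun x => (rowOutcomes G S x).exists_min_image v (toFinite _) (hne x)
  obtain ⟨x₀, hx₀, hmax⟩ := R.exists_max_image (v ∘ m) (toFinite _) hR
  exact ⟨m x₀, ⟨x₀, hx₀, hmin x₀⟩, fun x hx => ⟨m x, hm x, hmax x hx⟩⟩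

theorem mem_rowOutcomes_of_guaranteeingRows_eq (hv : Injective v) {q : O}
    (hR : guaranteeingRows G v R S (v q) = R)
    (hq : ∀ x ∈ R, ∃ o ∈ rowOutcomes G S x, v o ≤ v q)
    {x : X} (hx : x ∈ R) : q ∈ rowOutcomes G S x := by
  obtain ⟨o, ho, hle⟩ := hq x hx
  have hge : v q ≤ v o := (hR.symm ▸ hx : x ∈ guaranteeingRows G v R S (v q)).2 o ho
  rwa [hv (le_antisymm hle hge)] at ho

variable [LE β] {vA : O → α} {vB : O → β}

theorem IsTightOn.exists_isSimpleNashEqOn_of_guaranteeingRows (hG : ∀ x y, (G x y).Nonempty)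
    (hT : IsTightOn G R S) {x : X} {y : Y} {o : O}
    (h : IsSimpleNashEqOn G vA vB (guaranteeingRows G vA R S a) S x y o) :
    ∃ y', IsSimpleNashEqOn G vA vB R S x y' o := by
  have hxR : x ∈ R := h.mem_rows.1
  have hao : a ≤ vA o := h.mem_rows.2 o h.mem_rowOutcomes
  obtain ⟨y', hy', hD⟩ :=
    hT.1 {o' | (vA o' ≤ vA o ∧ o' ∉ rowOutcomes G S x) ∨ o' = o} fun x' hx' => by
      by_cases hx'' : x' ∈ guaranteeingRows G vA R S a
      · obtain ⟨o', ho'⟩ := hG x' y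
        have hcol : o' ∈ colOutcomes G _ y := mem_colOutcomes.2 ⟨x', hx'', ho'⟩
        refine ⟨o', ?_, mem_rowOutcomes.2 ⟨y, h.mem_cols, ho'⟩⟩
        by_cases heq : o' = o
        · exact Or.inr heq
        · exact Or.inl ⟨h.le_of_mem_col o' hcol, fun hrow => heq (h.eq_of_mem hrow hcol)⟩
      · obtain ⟨o', ho', hlt⟩ := exists_lt_of_notMem_guaranteeingRows hx' hx''
        exact ⟨o', Or.inl ⟨(hlt.trans_le hao).le,
          fun hrow => (h.mem_rows.2 o' hrow).not_gt hlt⟩, ho'⟩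
  have hinter : rowOutcomes G S x ∩ colOutcomes G R y' ⊆ {o} :=
    fun o' ho' => (hD ho'.2).resolve_left fun h' => h'.2 ho'.1
  refine ⟨y', hxR, hy', ?_, fun o' ho' => ?_, h.le_of_mem_row⟩
  · exact ((hG x y').mono (subset_rowOutcomes_inter_colOutcomes hxR hy')).subset_singleton_iff.1
      hinter
  · rcases hD ho' with h' | rfl
    exacts [h'.1, le_rfl]

end Guaranteeing

theorem IsTightOn.exists_isSimpleNashEqOn [LinearOrder α] [LinearOrder β] [Finite X] [Finite Y]
    [Finite O] (hG : ∀ x y, (G x y).Nonempty) {vA : O → α} {vB : O → β} (hvA : Injective vA)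
    (hvB : Injective vB) (hR : R.Nonempty) (hS : S.Nonempty) (hT : IsTightOn G R S) :
    ∃ x y o, IsSimpleNashEqOn G vA vB R S x y o := by
  induction hn : R.ncard + S.ncard using Nat.strong_induction_on generalizing R S with
  | _ n ih =>
  have hG' : ∀ y x, (Function.swap G y x).Nonempty := fun y x => hG x y
  obtain ⟨q, hqR, hq⟩ := exists_maximin hG hR hS vA
  obtain ⟨p, hpS, hp⟩ := exists_maximin hG' hS hR vB
  by_cases hR' : guaranteeingRows G vA R S (vA q) = R
  · by_cases hS' : guaranteeingRows (Function.swap G) vB S R (vB p) = S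
    · obtain ⟨x, y, h⟩ := hT.exists_isSimpleNashEqOn_of_forall_mem (vA := vA) (vB := vB) hG
        (fun _ => mem_rowOutcomes_of_guaranteeingRows_eq hvA hR' hq)
        (fun _ => mem_rowOutcomes_of_guaranteeingRows_eq hvB hS' hp)
      exact ⟨x, y, q, h⟩
    · have hlt := ncard_lt_ncard (ssubset_of_subset_of_ne guaranteeingRows_subset hS')
      obtain ⟨x, y, o, h⟩ :=
        ih _ (by omega) hR hpS (hT.swap.restrict_guaranteeingRows vB _).swap rfl
      obtain ⟨x', h'⟩ := hT.swap.exists_isSimpleNashEqOn_of_guaranteeingRows hG' h.swap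
      exact ⟨x', y, o, h'.swap⟩
  · have hlt := ncard_lt_ncard (ssubset_of_subset_of_ne guaranteeingRows_subset hR')
    obtain ⟨x, y, o, h⟩ := ih _ (by omega) hqR hS (hT.restrict_guaranteeingRows vA _) rfl
    obtain ⟨y', h'⟩ := hT.exists_isSimpleNashEqOn_of_guaranteeingRows hG h
    exact ⟨x, y', o, h'⟩

end TightGames

theorem exists_injective_lex_refinement {O α : Type*} [Countable O] [LinearOrder α]
    (u : O → α) :
    ∃ v : O → α ×ₗ ℕ, Injective v ∧ ∀ a b, v a ≤ v b → u a ≤ u b := by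
  obtain ⟨e, he⟩ := exists_injective_nat O
  exact ⟨fun o => toLex (u o, e o), fun a b h => he (congrArg (fun t => (ofLex t).2) h),
    fun a b h => Prod.Lex.monotone_fst _ _ h⟩

theorem tight_correspondence_simple_NE_general
    {X Y O : Type*} [Fintype X] [Fintype Y] [Fintype O]
    [Nonempty X] [Nonempty Y]
    (G : X → Y → Set O)
    (hG : ∀ x y, (G x y).Nonempty)
    (ht' : ∀ D' : Set O, (∀ x, (D' ∩ ⋃ y, G x y).Nonempty) →
      ∃ y, (⋃ x, G x y) ⊆ D')
    (ht'' : ∀ C' : Set O, (∀ y, (C' ∩ ⋃ x, G x y).Nonempty) →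
      ∃ x, (⋃ y, G x y) ⊆ C')
    (uA uB : O → ℝ) :
    ∃ (x : X) (y : Y) (o : O),
      G x y = {o} ∧
      (∀ x', ∀ o' ∈ G x' y, uA o' ≤ uA o) ∧
      (∀ y', ∀ o' ∈ G x y', uB o' ≤ uB o) := by
  obtain ⟨vA, hvA, huA⟩ := exists_injective_lex_refinement uA
  obtain ⟨vB, hvB, huB⟩ := exists_injective_lex_refinement uB
  have hT : IsTightOn G univ univ := by
    simpa only [IsTightOn, rowOutcomes, colOutcomes, mem_univ, iUnion_true, forall_const,
      true_and] using And.intro ht' ht''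
  obtain ⟨x, y, o, h⟩ := hT.exists_isSimpleNashEqOn hG hvA hvB univ_nonempty univ_nonempty
  refine ⟨x, y, o, h.eq_singleton hG, fun x' o' ho' => huA _ _ ?_, fun y' o' ho' => huB _ _ ?_⟩
  · exact h.le_of_mem_col o' (mem_colOutcomes.2 ⟨x', mem_univ x', ho'⟩)
  · exact h.le_of_mem_row o' (mem_rowOutcomes.2 ⟨y', mem_univ y', ho'⟩)

/-- Every tight game correspondence has, for every payoff, a simple Nash
equilibrium, which is a Nash equilibrium of every game form `g ∈ G`. -/
theorem tight_correspondence_simple_NE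
    {X Y O : Type*} [Fintype X] [Fintype Y] [Fintype O]
    [Nonempty X] [Nonempty Y] [Nonempty O]
    (G : X → Y → Set O)
    (hG : ∀ x y, (G x y).Nonempty)
    (ht' : ∀ D' : Set O, (∀ x, (D' ∩ ⋃ y, G x y).Nonempty) →
      ∃ y, (⋃ x, G x y) ⊆ D')
    (ht'' : ∀ C' : Set O, (∀ y, (C' ∩ ⋃ x, G x y).Nonempty) →
      ∃ x, (⋃ y, G x y) ⊆ C')
    (uA uB : O → ℝ) :
    ∃ (x : X) (y : Y) (o : O),
      G x y = {o} ∧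
      (∀ x', ∀ o' ∈ G x' y, uA o' ≤ uA o) ∧
      (∀ y', ∀ o' ∈ G x y', uB o' ≤ uB o) :=
  tight_correspondence_simple_NE_general G hG ht' ht'' uA uB
end

section
/- Let O be a finite set, X, Y nonempty index sets, C : X → Set O and D : Y → Set O hypergraphs on O, and let c, d be two distinct elements not in O. Define the hypergraph E on the ground set O ∪ {c, d} whose edges are C x ∪ {c} for x ∈ X, D y ∪ {d} for y ∈ Y, and {c, d}. Then C and D are dual (satisfy (i), (t') and (t'')) if and only if E is self-dual (any two edges of E intersect, and every subset of O ∪ {c,d} intersecting every edge of E contains an edge of E). -/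
/-- Seymour's observation: `C` and `D` are dual if and only if the hypergraph
`E = {C x ∪ {c}, D y ∪ {d}, {c,d}}` on the ground set `O ∪ {c,d}` is
self-dual. -/
theorem seymour_selfdual_criterion
    {Ω X Y : Type*} [Fintype Ω] [Nonempty X] [Nonempty Y]
    (O : Set Ω) (c d : Ω) (hcd : c ≠ d) (hc : c ∉ O) (hd : d ∉ O)
    (C : X → Set Ω) (D : Y → Set Ω)
    (hCO : ∀ x, C x ⊆ O) (hDO : ∀ y, D y ⊆ O) :
    let E : Set (Set Ω) :=
      {e | (∃ x, e = C x ∪ {c}) ∨ (∃ y, e = D y ∪ {d}) ∨ e = {c, d}}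
    (((∀ x y, (C x ∩ D y).Nonempty) ∧
      (∀ D' : Set Ω, D' ⊆ O → (∀ x, (D' ∩ C x).Nonempty) → ∃ y, D y ⊆ D') ∧
      (∀ C' : Set Ω, C' ⊆ O → (∀ y, (C' ∩ D y).Nonempty) → ∃ x, C x ⊆ C'))
     ↔
     ((∀ e₁ ∈ E, ∀ e₂ ∈ E, (e₁ ∩ e₂).Nonempty) ∧
      (∀ W : Set Ω, W ⊆ O ∪ {c, d} → (∀ e ∈ E, (W ∩ e).Nonempty) →
        ∃ e ∈ E, e ⊆ W))) := by
  intro E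
  constructor
  · rintro ⟨hi, ht', ht''⟩
    constructor
    · rintro e₁ he₁ e₂ he₂
      rcases he₁ with ⟨x, rfl⟩ | ⟨y, rfl⟩ | rfl <;>
        rcases he₂ with ⟨x', rfl⟩ | ⟨y', rfl⟩ | rfl
      · exact ⟨c, by simp, by simp⟩
      · obtain ⟨z, hz1, hz2⟩ := hi x y'
        exact ⟨z, Or.inl hz1, Or.inl hz2⟩
      · exact ⟨c, by simp, by simp⟩
      · obtain ⟨z, hz1, hz2⟩ := hi x' y
        exact ⟨z, Or.inl hz2, Or.inl hz1⟩
      · exact ⟨d, by simp, by simp⟩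
      · exact ⟨d, by simp, by simp⟩
      · exact ⟨c, by simp, by simp⟩
      · exact ⟨d, by simp, by simp⟩
      · exact ⟨c, by simp, by simp⟩
    · intro W hW hmeet
      obtain ⟨z, hzW, hzcd⟩ := hmeet {c, d} (Or.inr (Or.inr rfl))
      rcases hzcd with hze | hze <;> rw [hze] at hzW
      · by_cases hdW : d ∈ W
        · exact ⟨{c, d}, Or.inr (Or.inr rfl), by
            intro w hw; rcases hw with rfl | rfl; exacts [hzW, hdW]⟩
        · have hmD : ∀ y, ((W ∩ O) ∩ D y).Nonempty := by
            intro y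
            obtain ⟨w, hw1, hw2⟩ := hmeet (D y ∪ {d}) (Or.inr (Or.inl ⟨y, rfl⟩))
            rcases hw2 with hw2 | hw2
            · exact ⟨w, ⟨hw1, hDO y hw2⟩, hw2⟩
            · exact absurd (hw2 ▸ hw1) hdW
          obtain ⟨x, hx⟩ := ht'' (W ∩ O) Set.inter_subset_right hmD
          refine ⟨C x ∪ {c}, Or.inl ⟨x, rfl⟩, ?_⟩
          intro w hw
          rcases hw with hw | hw
          · exact (hx hw).1
          · exact hw ▸ hzW
      · by_cases hcW : c ∈ W
        · exact ⟨{c, d}, Or.inr (Or.inr rfl), by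
            intro w hw; rcases hw with rfl | rfl; exacts [hcW, hzW]⟩
        · have hmC : ∀ x, ((W ∩ O) ∩ C x).Nonempty := by
            intro x
            obtain ⟨w, hw1, hw2⟩ := hmeet (C x ∪ {c}) (Or.inl ⟨x, rfl⟩)
            rcases hw2 with hw2 | hw2
            · exact ⟨w, ⟨hw1, hCO x hw2⟩, hw2⟩
            · exact absurd (hw2 ▸ hw1) hcW
          obtain ⟨y, hy⟩ := ht' (W ∩ O) Set.inter_subset_right hmC
          refine ⟨D y ∪ {d}, Or.inr (Or.inl ⟨y, rfl⟩), ?_⟩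
          intro w hw
          rcases hw with hw | hw
          · exact (hy hw).1
          · exact hw ▸ hzW
  · rintro ⟨hint, htr⟩
    refine ⟨?_, ?_, ?_⟩
    · intro x y
      obtain ⟨z, hz1, hz2⟩ := hint (C x ∪ {c}) (Or.inl ⟨x, rfl⟩)
        (D y ∪ {d}) (Or.inr (Or.inl ⟨y, rfl⟩))
      rcases hz1 with hz1 | rfl
      · rcases hz2 with hz2 | rfl
        · exact ⟨z, hz1, hz2⟩
        · exact absurd (hCO x hz1) hd
      · rcases hz2 with hz2 | hz2
        · exact absurd (hDO y hz2) hc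
        · exact absurd hz2 hcd
    · intro D' hD'O hm
      have hmeet : ∀ e ∈ E, ((D' ∪ {d}) ∩ e).Nonempty := by
        rintro e (⟨x, rfl⟩ | ⟨y, rfl⟩ | rfl)
        · obtain ⟨z, hz1, hz2⟩ := hm x
          exact ⟨z, Or.inl hz1, Or.inl hz2⟩
        · exact ⟨d, Or.inr rfl, Or.inr rfl⟩
        · exact ⟨d, Or.inr rfl, Or.inr rfl⟩
      obtain ⟨e, he, hew⟩ := htr (D' ∪ {d})
        (Set.union_subset (hD'O.trans Set.subset_union_left)
          (fun w hw => Or.inr (Or.inr hw))) hmeet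
      have hcn : c ∉ D' ∪ {d} := by
        rintro (h | h)
        · exact hc (hD'O h)
        · exact hcd h
      rcases he with ⟨x, rfl⟩ | ⟨y, rfl⟩ | rfl
      · exact absurd (hew (Or.inr rfl)) hcn
      · refine ⟨y, fun w hw => ?_⟩
        rcases hew (Or.inl hw) with h | h
        · exact h
        · exact absurd (h ▸ hDO y hw) hd
      · exact absurd (hew (Or.inl rfl)) hcn
    · intro C' hC'O hm
      have hmeet : ∀ e ∈ E, ((C' ∪ {c}) ∩ e).Nonempty := by
        rintro e (⟨x, rfl⟩ | ⟨y, rfl⟩ | rfl)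
        · exact ⟨c, Or.inr rfl, Or.inr rfl⟩
        · obtain ⟨z, hz1, hz2⟩ := hm y
          exact ⟨z, Or.inl hz1, Or.inl hz2⟩
        · exact ⟨c, Or.inr rfl, Or.inl rfl⟩
      obtain ⟨e, he, hew⟩ := htr (C' ∪ {c})
        (Set.union_subset (hC'O.trans Set.subset_union_left)
          (fun w hw => Or.inr (Or.inl hw))) hmeet
      have hdn : d ∉ C' ∪ {c} := by
        rintro (h | h)
        · exact hd (hC'O h)
        · exact hcd h.symm
      rcases he with ⟨x, rfl⟩ | ⟨y, rfl⟩ | rfl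
      · refine ⟨x, fun w hw => ?_⟩
        rcases hew (Or.inl hw) with h | h
        · exact h
        · exact absurd (h ▸ hCO x hw) hc
      · exact absurd (hew (Or.inr rfl)) hdn
      · exact absurd (hew (Or.inr rfl)) hdn
end

section
/- For m = n = k = 2, the three-person monotone bargaining game correspondence G_{2,2,2} is not Nash-solvable: there exist utility functions u_A, u_B, u_C : Fin 2 × Fin 2 × Fin 2 → ℝ such that for every game form g assigning to each triple (x,y,z) of monotone strategies a deal g(x,y,z) ∈ G(x,y,z), the game (g, u_A, u_B, u_C) has no Nash equilibrium; i.e., for every triple (x,y,z) of monotone strategies, either there is a monotone x' with u_A(g(x',y,z)) > u_A(g(x,y,z)), or a monotone y' with u_B(g(x,y',z)) > u_B(g(x,y,z)), or a monotone z' with u_C(g(x,y,z')) > u_C(g(x,y,z)). -/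
def tpmFA : Fin 2 × Fin 2 × Fin 2 → ℤ :=
  fun p => ![![![5,0],![1,3]],![![7,6],![4,2]]] p.1 p.2.1 p.2.2

def tpmFB : Fin 2 × Fin 2 × Fin 2 → ℤ :=
  fun p => ![![![5,3],![1,6]],![![2,7],![0,4]]] p.1 p.2.1 p.2.2

def tpmFC : Fin 2 × Fin 2 × Fin 2 → ℤ :=
  fun p => ![![![0,4],![6,1]],![![5,2],![7,3]]] p.1 p.2.1 p.2.2

def tpmDeal (x y z : Fin 2 → Fin 2) (p : Fin 2 × Fin 2 × Fin 2) : Prop :=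
  x p.1 = p.2.1 ∧ y p.2.1 = p.2.2 ∧ z p.2.2 = p.1

instance (x y z : Fin 2 → Fin 2) (p : Fin 2 × Fin 2 × Fin 2) :
    Decidable (tpmDeal x y z p) := by unfold tpmDeal; infer_instance

instance : DecidablePred (Monotone : (Fin 2 → Fin 2) → Prop) :=
  fun _ => by unfold Monotone; infer_instance

set_option synthInstance.maxHeartbeats 1000000 in
set_option synthInstance.maxSize 512 in
set_option maxHeartbeats 2000000 in
lemma tpm_key :
    ∀ (x y z : {f : Fin 2 → Fin 2 // Monotone f}) (p : Fin 2 × Fin 2 × Fin 2),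
      tpmDeal x.val y.val z.val p →
      (∃ x' : {f : Fin 2 → Fin 2 // Monotone f}, ∀ q, tpmDeal x'.val y.val z.val q → tpmFA p < tpmFA q) ∨
      (∃ y' : {f : Fin 2 → Fin 2 // Monotone f}, ∀ q, tpmDeal x.val y'.val z.val q → tpmFB p < tpmFB q) ∨
      (∃ z' : {f : Fin 2 → Fin 2 // Monotone f}, ∀ q, tpmDeal x.val y.val z'.val q → tpmFC p < tpmFC q) := by
  decide

/-- The three-person monotone bargaining game correspondence `G_{2,2,2}` is
not Nash-solvable: for some utilities, every game form selecting a deal for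
each strategy triple yields a game without a Nash equilibrium. -/
theorem three_person_monotone_bargaining_not_nash_solvable :
    ∃ uA uB uC : Fin 2 × Fin 2 × Fin 2 → ℝ,
      ∀ g : {x : Fin 2 → Fin 2 // Monotone x} →
            {y : Fin 2 → Fin 2 // Monotone y} →
            {z : Fin 2 → Fin 2 // Monotone z} → Fin 2 × Fin 2 × Fin 2,
        (∀ x y z,
          x.val (g x y z).1 = (g x y z).2.1 ∧
          y.val (g x y z).2.1 = (g x y z).2.2 ∧
          z.val (g x y z).2.2 = (g x y z).1) →
        ∀ x y z,
          (∃ x', uA (g x y z) < uA (g x' y z)) ∨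
          (∃ y', uB (g x y z) < uB (g x y' z)) ∨
          (∃ z', uC (g x y z) < uC (g x y z')) := by
  refine ⟨fun p => (tpmFA p : ℝ), fun p => (tpmFB p : ℝ), fun p => (tpmFC p : ℝ),
    fun g hg x y z => ?_⟩
  rcases tpm_key x y z (g x y z) (hg x y z) with ⟨x', h⟩ | ⟨y', h⟩ | ⟨z', h⟩
  · exact Or.inl ⟨x', Int.cast_lt.mpr (h (g x' y z) (hg x' y z))⟩
  · exact Or.inr (Or.inl ⟨y', Int.cast_lt.mpr (h (g x y' z) (hg x y' z))⟩)
  · exact Or.inr (Or.inr ⟨z', Int.cast_lt.mpr (h (g x y z') (hg x y z'))⟩)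
end
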